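/- Let % be a symbol not in Σ and L ⊆ Σ*. Then outf⁻¹(L) ∩ (%·Σ*) = {%yx : x ∈ L, y ∈ Σ*}, i.e., intersecting the inverse outfix of L (over alphabet Σ ∪ {%}) with %Σ* yields exactly % followed by suff⁻¹(L). -/
import Mathlib


/-- Let `%` (here `pc`) be a symbol not in `Σ` (here `S`) and `L ⊆ Σ*`. Then
`outf⁻¹(L) ∩ %·Σ* = {%yx : x ∈ L, y ∈ Σ*} = {%}·suff⁻¹(L)`. -/
theorem outfInv_inter_percent {α : Type*} (S : Set α) (pc : α) (hpc : pc ∉ S)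
    (L : Set (List α)) (hL : ∀ w ∈ L, ∀ c ∈ w, c ∈ S) :
    {v | ∃ x w y : List α, x ++ y ∈ L ∧ v = x ++ w ++ y} ∩
      {v | ∃ y : List α, (∀ c ∈ y, c ∈ S) ∧ v = pc :: y} =
    {v | ∃ y x : List α, x ∈ L ∧ (∀ c ∈ y, c ∈ S) ∧ v = pc :: (y ++ x)} := by
  ext v
  constructor
  · rintro ⟨⟨x, w, y, hxy, rfl⟩, ⟨y', hy'S, hv⟩⟩
    -- x must be empty
    cases x with
    | cons a x =>
      simp only [List.cons_append] at hv
      have : a = pc := by exact (List.cons_eq_cons.mp hv).1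
      exact absurd (hL _ hxy a (by simp)) (this ▸ hpc)
    | nil =>
      simp only [List.nil_append] at hv hxy ⊢
      cases w with
      | nil =>
        cases y with
        | nil => simp at hv
        | cons b y =>
          simp only [List.nil_append] at hv
          injection hv with h1 _
          exact absurd (hL _ hxy b (by simp)) (h1 ▸ hpc)
      | cons b w =>
        simp only [List.cons_append] at hv
        injection hv with h1 h2
        refine ⟨w, y, hxy, fun c hc => ?_, by simp [h1]⟩
        exact hy'S c (h2 ▸ List.mem_append_left _ hc)
  · rintro ⟨y, x, hx, hyS, rfl⟩
    refine ⟨⟨[], pc :: y, x, by simpa using hx, by simp⟩,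
      ⟨y ++ x, fun c hc => ?_, rfl⟩⟩
    rcases List.mem_append.1 hc with h | h
    · exact hyS c h
    · exact hL x hx c h
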